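/- Let M = (R,T,c) and M' = (R,T,c') be MRTA instances on the same robots and tasks whose cost functions c and c' are both injective on E, and let (W, a) be the output of the SSI auction on M, with u_k the second-best edge of round k. Suppose there exists K such that the edge e = w_K is a winning edge and c'(f) = c(f) for all f ∈ E ∖ {e}. Then the SSI auction on M' outputs the same winning-edge list and assignment function as the SSI auction on M if and only if c(u_K) > c'(e), and in addition c'(e) > max_{k ∈ B_e ∖ {K}} c(w_k) when B_e ∖ {K} ≠ ∅, while c'(e) ≥ 0 when B_e = {K}. -/

import Mathlib

open Finset

/-- The set of tasks assigned in the bid rounds with (0-based) index `< k`. -/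
def auctionAssigned {V : Type*} [DecidableEq V] {n : ℕ} (w : Fin n → V × V) (k : ℕ) :
    Finset V :=
  (Finset.univ.filter fun i : Fin n => (i : ℕ) < k).image fun i => (w i).2

/-- `w` is the output of the SSI auction for the instance `(R, T, c)`. -/
def IsAuction {V : Type*} [DecidableEq V] (R T : Finset V) (c : V → V → ℝ) {n : ℕ}
    (w : Fin n → V × V) : Prop :=
  ∀ k : Fin n,
    (w k).1 ∈ R ∪ auctionAssigned w (k : ℕ) ∧
    (w k).2 ∈ T \ auctionAssigned w (k : ℕ) ∧
    ∀ s ∈ R ∪ auctionAssigned w (k : ℕ), ∀ t ∈ T \ auctionAssigned w (k : ℕ),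
      (s, t) ≠ w k → c (w k).1 (w k).2 < c s t

/-- `c` is injective on the edge set of the complete graph. -/
def InjOnEdges {V : Type*} (c : V → V → ℝ) : Prop :=
  ∀ x y x' y' : V, x ≠ y → x' ≠ y' → c x y = c x' y' →
    (x = x' ∧ y = y') ∨ (x = y' ∧ y = x')

/-- The assignment function of the auction: `a v = k` if `v` is the task assigned
in (1-based) round `k`, and `a v = 0` if `v` is never assigned (e.g. a robot). -/
def assignFn {V : Type*} [DecidableEq V] {n : ℕ} (w : Fin n → V × V) (v : V) : ℕ :=
  (Finset.univ.filter fun k : Fin n => (w k).2 = v).sup fun k => (k : ℕ) + 1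

/-- The set `B_e` of (1-based) bid rounds considering the edge `e = {x,y}`:
`B_e = {k : min(a x, a y) < k ≤ max(a x, a y)}`. -/
def bidRounds {V : Type*} (a : V → ℕ) (x y : V) : Finset ℕ :=
  Finset.Ioc (min (a x) (a y)) (max (a x) (a y))


/-- `p` is the second-best edge of round `K`: it is an edge considered in round `K`,
distinct from the winning edge `w K`, of minimal cost among all such edges. -/
def IsSecondBest {V : Type*} [DecidableEq V] (c : V → V → ℝ) {n : ℕ}
    (w : Fin n → V × V) (K : Fin n) (p : V × V) : Prop :=
  p.1 ≠ p.2 ∧ p ≠ w K ∧ (p.2, p.1) ≠ w K ∧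
  ((K : ℕ) + 1) ∈ bidRounds (assignFn w) p.1 p.2 ∧
  ∀ x y : V, x ≠ y → ((K : ℕ) + 1) ∈ bidRounds (assignFn w) x y →
    (x, y) ≠ w K → (y, x) ≠ w K → c p.1 p.2 ≤ c x y

/-!
Write `a` for the assignment function. In round `k` (0-based) the bidders are exactly the
vertices with `a s ≤ k` and the open tasks those with `k < a t`, so whether a fixed list `w`
is the auction output for a cost function is a family of strict inequalities between the
cost of `w k` and the costs of the pairs available in round `k`. Changing only the cost of
`e = w K` touches just two kinds of these: in round `K`, `e` must still beat every other
available edge, i.e. the cheapest of them, `u_K`; in every other round `k ∈ B_e`, where `e`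
is available, `e` must still lose to `w k`.
-/

theorem succ_mem_bidRounds_iff {V : Type*} {a : V → ℕ} {x y : V} {k : ℕ} :
    k + 1 ∈ bidRounds a x y ↔ (a x ≤ k ∧ k < a y) ∨ (a y ≤ k ∧ k < a x) := by
  simp only [bidRounds, Finset.mem_Ioc]
  omega

section

variable {V : Type*} [DecidableEq V] {n : ℕ} {w : Fin n → V × V}

theorem mem_auctionAssigned {k : ℕ} {v : V} :
    v ∈ auctionAssigned w k ↔ ∃ j : Fin n, (j : ℕ) < k ∧ (w j).2 = v := by
  simp [auctionAssigned]

theorem assignFn_eq_zero {v : V} (hv : ∀ k, (w k).2 ≠ v) : assignFn w v = 0 := by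
  rw [assignFn, Finset.filter_false_of_mem fun k _ => hv k, Finset.sup_empty, Nat.bot_eq_zero]

end

namespace IsAuction

variable {V : Type*} [DecidableEq V] {R T : Finset V} {c : V → V → ℝ}
  {w : Fin T.card → V × V}

theorem snd_mem (hw : IsAuction R T c w) (k : Fin T.card) : (w k).2 ∈ T :=
  (Finset.mem_sdiff.1 (hw k).2.1).1

theorem injective_snd (hw : IsAuction R T c w) : Function.Injective fun k => (w k).2 := by
  intro j k h
  have not_earlier : ∀ {i l : Fin T.card}, (i : ℕ) < l → (w i).2 ≠ (w l).2 :=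
    fun {i l} hil he => (Finset.mem_sdiff.1 (hw l).2.1).2 (mem_auctionAssigned.2 ⟨i, hil, he⟩)
  rcases lt_trichotomy (j : ℕ) k with hjk | hjk | hjk
  · exact absurd h (not_earlier hjk)
  · exact Fin.ext hjk
  · exact absurd h.symm (not_earlier hjk)

theorem snd_mem_auctionAssigned_iff (hw : IsAuction R T c w) {j : Fin T.card} {k : ℕ} :
    (w j).2 ∈ auctionAssigned w k ↔ (j : ℕ) < k := by
  refine mem_auctionAssigned.trans ⟨?_, fun h => ⟨j, h, rfl⟩⟩
  rintro ⟨i, hik, hij⟩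
  exact hw.injective_snd hij ▸ hik

theorem exists_snd_eq (hw : IsAuction R T c w) {t : V} (ht : t ∈ T) :
    ∃ k, (w k).2 = t := by
  have himage : Finset.univ.image (fun k => (w k).2) = T :=
    Finset.eq_of_subset_of_card_le
      (Finset.image_subset_iff.2 fun k _ => hw.snd_mem k)
      (by rw [Finset.card_image_of_injective _ hw.injective_snd, Finset.card_univ,
        Fintype.card_fin])
  rw [← himage] at ht
  simpa using ht

theorem assignFn_snd (hw : IsAuction R T c w) (k : Fin T.card) :
    assignFn w (w k).2 = k + 1 := by
  have hround : Finset.univ.filter (fun j => (w j).2 = (w k).2) = {k} := by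
    ext j
    simpa using hw.injective_snd.eq_iff
  rw [assignFn, hround, Finset.sup_singleton]

variable [Fintype V]

theorem snd_eq_or_mem_robots (hw : IsAuction R T c w) (hunion : R ∪ T = Finset.univ) (v : V) :
    (∃ k, (w k).2 = v) ∨ (v ∈ R ∧ v ∉ T ∧ assignFn w v = 0) := by
  by_cases hv : ∃ k, (w k).2 = v
  · exact Or.inl hv
  · push Not at hv
    have hvT : v ∉ T := fun ht => (hw.exists_snd_eq ht).elim fun k hk => hv k hk
    have hvR : v ∈ R := by
      simpa [hvT] using (hunion ▸ Finset.mem_univ v : v ∈ R ∪ T)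
    exact Or.inr ⟨hvR, hvT, assignFn_eq_zero hv⟩

theorem mem_bidders_iff (hw : IsAuction R T c w) (hdisj : Disjoint R T)
    (hunion : R ∪ T = Finset.univ) {k : ℕ} {s : V} :
    s ∈ R ∪ auctionAssigned w k ↔ assignFn w s ≤ k := by
  rcases hw.snd_eq_or_mem_robots hunion s with ⟨j, rfl⟩ | ⟨hsR, -, hs0⟩
  · have hjR : (w j).2 ∉ R := Finset.disjoint_right.1 hdisj (hw.snd_mem j)
    rw [Finset.mem_union, hw.snd_mem_auctionAssigned_iff, hw.assignFn_snd]
    simp only [hjR, false_or]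
    omega
  · simp [hsR, hs0]

theorem mem_openTasks_iff (hw : IsAuction R T c w) (hunion : R ∪ T = Finset.univ) {k : ℕ}
    {t : V} : t ∈ T \ auctionAssigned w k ↔ k < assignFn w t := by
  rcases hw.snd_eq_or_mem_robots hunion t with ⟨j, rfl⟩ | ⟨-, htT, ht0⟩
  · rw [Finset.mem_sdiff, hw.snd_mem_auctionAssigned_iff, hw.assignFn_snd]
    simp only [hw.snd_mem j, true_and]
    omega
  · simp [htT, ht0]

theorem isAuction_iff (hw : IsAuction R T c w) (hdisj : Disjoint R T)
    (hunion : R ∪ T = Finset.univ) {c' : V → V → ℝ} :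
    IsAuction R T c' w ↔ ∀ (k : Fin T.card) (s t : V), assignFn w s ≤ k → k < assignFn w t →
      (s, t) ≠ w k → c' (w k).1 (w k).2 < c' s t := by
  constructor
  · intro hw' k s t hs ht
    exact (hw' k).2.2 s ((hw.mem_bidders_iff hdisj hunion).2 hs) t
      ((hw.mem_openTasks_iff hunion).2 ht)
  · intro h k
    exact ⟨(hw k).1, (hw k).2.1, fun s hs t ht =>
      h k s t ((hw.mem_bidders_iff hdisj hunion).1 hs) ((hw.mem_openTasks_iff hunion).1 ht)⟩

theorem assignFn_fst_le (hw : IsAuction R T c w) (hdisj : Disjoint R T)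
    (hunion : R ∪ T = Finset.univ) (k : Fin T.card) : assignFn w (w k).1 ≤ k :=
  (hw.mem_bidders_iff hdisj hunion).1 (hw k).1

theorem swap_ne (hw : IsAuction R T c w) (hdisj : Disjoint R T) (hunion : R ∪ T = Finset.univ)
    {k : ℕ} {s t : V} (hs : assignFn w s ≤ k) (ht : k < assignFn w t) (j : Fin T.card) :
    (t, s) ≠ w j := by
  intro h
  have hj₁ := hw.assignFn_fst_le hdisj hunion j
  have hj₂ := hw.assignFn_snd j
  rw [← h] at hj₁ hj₂
  dsimp only at hj₁ hj₂
  omega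

end IsAuction

theorem statement7_general {V : Type*} [Fintype V] [DecidableEq V] (R T : Finset V)
    (hdisj : Disjoint R T) (hunion : R ∪ T = Finset.univ)
    (c c' : V → V → ℝ)
    (hsymm : ∀ x y, c x y = c y x)
    (hnonneg' : ∀ x y, 0 ≤ c' x y)
    (w : Fin T.card → V × V) (hw : IsAuction R T c w)
    -- the edge `e = w K` is a winning edge, with second-best edge `u` in round `K`
    (K : Fin T.card) (u : V × V) (hu : IsSecondBest c w K u)
    -- `c'` agrees with `c` on every edge other than `e`
    (hsame : ∀ p q : V, (p, q) ≠ w K → (q, p) ≠ w K → c' p q = c p q) :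
    -- the auction on `c'` outputs the same winning-edge list (hence the same
    -- assignment function) iff `c(u_K) > c'(e)`, and in addition
    -- `c'(e) > max_{k ∈ B_e ∖ {K}} c(w_k)` when `B_e ∖ {K} ≠ ∅`,
    -- while `c'(e) ≥ 0` when `B_e = {K}`
    IsAuction R T c' w ↔
      (c' (w K).1 (w K).2 < c u.1 u.2 ∧
       (∀ k : Fin T.card,
          ((k : ℕ) + 1) ∈ bidRounds (assignFn w) (w K).1 (w K).2 → k ≠ K →
          c (w k).1 (w k).2 < c' (w K).1 (w K).2) ∧
       (bidRounds (assignFn w) (w K).1 (w K).2 = {(K : ℕ) + 1} →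
          0 ≤ c' (w K).1 (w K).2)) := by
  have heK₁ := hw.assignFn_fst_le hdisj hunion K
  have heK₂ := hw.assignFn_snd K
  have hsame_avail : ∀ {k : ℕ} {s t : V}, assignFn w s ≤ k → k < assignFn w t →
      (s, t) ≠ w K → c' s t = c s t :=
    fun hs ht hne => hsame _ _ hne (hw.swap_ne hdisj hunion hs ht K)
  have hsame_win : ∀ k ≠ K, c' (w k).1 (w k).2 = c (w k).1 (w k).2 := fun k hk =>
    hsame_avail (hw.assignFn_fst_le hdisj hunion k) (hw.assignFn_snd k).ge
      (fun h => hk (hw.injective_snd (congrArg Prod.snd h)))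
  obtain ⟨-, hu_ne, hu_swap_ne, hu_round, hu_min⟩ := hu
  rw [hw.isAuction_iff hdisj hunion]
  constructor
  · intro hw'
    refine ⟨?_, fun k hk hkK => ?_, fun _ => hnonneg' _ _⟩
    · rcases succ_mem_bidRounds_iff.1 hu_round with ⟨hs, ht⟩ | ⟨hs, ht⟩
      · exact hsame_avail hs ht hu_ne ▸ hw' K u.1 u.2 hs ht hu_ne
      · exact hsymm u.1 u.2 ▸ hsame_avail hs ht hu_swap_ne ▸ hw' K u.2 u.1 hs ht hu_swap_ne
    · have hk' : assignFn w (w K).1 ≤ k ∧ (k : ℕ) < K := by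
        have := Fin.val_ne_of_ne hkK
        rcases succ_mem_bidRounds_iff.1 hk with h | h <;> omega
      have hlt := hw' k (w K).1 (w K).2 hk'.1 (by omega)
        fun h => hkK (hw.injective_snd (congrArg Prod.snd h)).symm
      rwa [hsame_win k hkK] at hlt
  · rintro ⟨hu_lt, hB_lt, -⟩ k s t hs ht hne
    by_cases he : (s, t) = w K
    · have hkK : k ≠ K := by rintro rfl; exact hne he
      obtain ⟨rfl, rfl⟩ := Prod.ext_iff.1 he
      rw [hsame_win k hkK]
      exact hB_lt k (succ_mem_bidRounds_iff.2 (Or.inl ⟨hs, ht⟩)) hkK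
    · rw [hsame_avail hs ht he]
      by_cases hkK : k = K
      · subst hkK
        exact hu_lt.trans_le (hu_min s t (by rintro rfl; omega)
          (succ_mem_bidRounds_iff.2 (Or.inl ⟨hs, ht⟩)) he (hw.swap_ne hdisj hunion hs ht k))
      · rw [hsame_win k hkK]
        exact (hw.isAuction_iff hdisj hunion).1 hw k s t hs ht hne

theorem statement7 {V : Type*} [Fintype V] [DecidableEq V] (R T : Finset V)
    (hdisj : Disjoint R T) (hunion : R ∪ T = Finset.univ) (hcard : 3 ≤ Fintype.card V)
    (c c' : V → V → ℝ)
    (hsymm : ∀ x y, c x y = c y x) (hnonneg : ∀ x y, 0 ≤ c x y) (hinj : InjOnEdges c)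
    (hsymm' : ∀ x y, c' x y = c' y x) (hnonneg' : ∀ x y, 0 ≤ c' x y) (hinj' : InjOnEdges c')
    (w : Fin T.card → V × V) (hw : IsAuction R T c w)
    -- the edge `e = w K` is a winning edge, with second-best edge `u` in round `K`
    (K : Fin T.card) (u : V × V) (hu : IsSecondBest c w K u)
    -- `c'` agrees with `c` on every edge other than `e`
    (hsame : ∀ p q : V, (p, q) ≠ w K → (q, p) ≠ w K → c' p q = c p q) :
    -- the auction on `c'` outputs the same winning-edge list (hence the same
    -- assignment function) iff `c(u_K) > c'(e)`, and in addition
    -- `c'(e) > max_{k ∈ B_e ∖ {K}} c(w_k)` when `B_e ∖ {K} ≠ ∅`,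
    -- while `c'(e) ≥ 0` when `B_e = {K}`
    IsAuction R T c' w ↔
      (c' (w K).1 (w K).2 < c u.1 u.2 ∧
       (∀ k : Fin T.card,
          ((k : ℕ) + 1) ∈ bidRounds (assignFn w) (w K).1 (w K).2 → k ≠ K →
          c (w k).1 (w k).2 < c' (w K).1 (w K).2) ∧
       (bidRounds (assignFn w) (w K).1 (w K).2 = {(K : ℕ) + 1} →
          0 ≤ c' (w K).1 (w K).2)) :=
  statement7_general R T hdisj hunion c c' hsymm hnonneg' w hw K u hu hsame
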